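/- arXiv:2504.14370 — 3 statements merged into one kernel-verified Lean document; each statement's English description precedes it below -/
import Mathlib

section
/- Let K be a language. If there exists an infinite perfect tower of languages with terminal language K, then for every language J with J ⊊ K there exists an infinite perfect tower with terminal language K whose first language is J. -/
/-- The sets `B_k` associated with a sequence of languages:
`B_0 = ⋂_i Λ i` and `B_k = (⋂_{i ≥ k} Λ i) \ (B_0 ∪ ⋯ ∪ B_{k-1})`. -/
def towerB (Λ : ℕ → Set ℕ) : ℕ → Set ℕ
  | k => {w | ∀ i, k ≤ i → w ∈ Λ i} \ {w | ∃ m, ∃ _ : m < k, w ∈ towerB Λ m}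

/-- `(Λ 0, Λ 1, …)` is an infinite perfect tower of (pairwise distinct, infinite)
languages with terminal language `K`. -/
structure IsPerfectTower (Λ : ℕ → Set ℕ) (K : Set ℕ) : Prop where
  injective : Function.Injective Λ
  infinite : ∀ j, (Λ j).Infinite
  proper : ∀ j, Λ j ⊂ K
  nonempty : ∀ j, (towerB Λ j).Nonempty
  complete : (⋃ j, towerB Λ j) = K

theorem towerB_def (Λ : ℕ → Set ℕ) (k : ℕ) :
    towerB Λ k = {w | ∀ i, k ≤ i → w ∈ Λ i} \ {w | ∃ m, ∃ _ : m < k, w ∈ towerB Λ m} := by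
  rw [towerB]

/-- If there is an infinite perfect tower with terminal language `K`, then for any
language `J ⊊ K` there is an infinite perfect tower with terminal language `K`
whose first language is `J`. -/
theorem stmt14 (K : Set ℕ) (hK : K.Infinite)
    (Λ : ℕ → Set ℕ) (hΛ : IsPerfectTower Λ K)
    (J : Set ℕ) (hJinf : J.Infinite) (hJK : J ⊂ K) :
    ∃ Λ' : ℕ → Set ℕ, IsPerfectTower Λ' K ∧ Λ' 0 = J := by
  classical
  obtain ⟨a, haK, haJ⟩ := Set.exists_of_ssubset hJK
  set nJ : ℕ → ℕ := Nat.nth (· ∈ J) with hnJ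
  have hJinf' : {x | x ∈ J}.Infinite := hJinf
  have hnJ_inj : Function.Injective nJ := Nat.nth_injective hJinf'
  have hnJ_mem : ∀ n, nJ n ∈ J := fun n => Nat.nth_mem_of_infinite hJinf' n
  set J1 : Set ℕ := Set.range (fun n => nJ (2 * n)) with hJ1def
  have hJ1subJ : J1 ⊆ J := by rintro x ⟨n, rfl⟩; exact hnJ_mem _
  have hJ1inf : J1.Infinite := Set.infinite_range_of_injective
    (fun m n h => by have := hnJ_inj h; omega)
  have haJ1 : a ∉ J1 := fun h => haJ (hJ1subJ h)
  -- D = K \ (J1 ∪ {a}), infinite since it contains all odd-indexed elements of J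
  set D : Set ℕ := K \ insert a J1 with hDdef
  have hDinf : D.Infinite := by
    have hsub : Set.range (fun n => nJ (2 * n + 1)) ⊆ D := by
      rintro x ⟨n, rfl⟩
      refine ⟨hJK.1 (hnJ_mem _), ?_⟩
      rintro (h | ⟨m, hm⟩)
      · exact haJ (h ▸ hnJ_mem _)
      · have := hnJ_inj hm; omega
    exact Set.Infinite.mono hsub (Set.infinite_range_of_injective
      (fun m n h => by have := hnJ_inj h; omega))
  have hDinf' : {x | x ∈ D}.Infinite := hDinf
  set d : ℕ → ℕ := Nat.nth (· ∈ D) with hddef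
  have hd_inj : Function.Injective d := Nat.nth_injective hDinf'
  have hd_mem : ∀ n, d n ∈ D := fun n => Nat.nth_mem_of_infinite hDinf' n
  have hd_surj : ∀ x ∈ D, ∃ n, d n = x := by
    intro x hx
    have := Nat.range_nth_of_infinite hDinf'
    have : x ∈ Set.range d := by rw [hddef, this]; exact hx
    exact this
  -- the tail sets
  set T : ℕ → Set ℕ := fun k => insert a (J1 ∪ d '' Set.Iio k) with hTdef
  have hTmono : ∀ {k j : ℕ}, k ≤ j → T k ⊆ T j := by
    intro k j hkj
    apply Set.insert_subset_insert
    apply Set.union_subset_union_right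
    exact Set.image_mono (fun x hx => lt_of_lt_of_le hx hkj)
  have hTsubK : ∀ k, T k ⊆ K := by
    intro k x hx
    rcases hx with rfl | hx | ⟨n, _, rfl⟩
    · exact haK
    · exact hJK.1 (hJ1subJ hx)
    · exact (hd_mem n).1
  have hdT : ∀ k, d k ∉ T k := by
    intro k hx
    rcases hx with h | h | ⟨n, hn, h⟩
    · exact (hd_mem k).2 (Or.inl h)
    · exact (hd_mem k).2 (Or.inr h)
    · have hn' : n < k := hn
      exact absurd (hd_inj h) (by omega)
  have hdT' : ∀ k, d k ∈ T (k + 1) := fun k =>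
    Or.inr (Or.inr ⟨k, by simp, rfl⟩)
  set Λ' : ℕ → Set ℕ := fun n => match n with | 0 => J | k + 1 => T k with hΛ'def
  have hΛ'0 : Λ' 0 = J := rfl
  have hΛ'succ : ∀ k, Λ' (k + 1) = T k := fun k => rfl
  -- the intersection sets
  have hInt : ∀ k, {w | ∀ i, k + 1 ≤ i → w ∈ Λ' i} = T k := by
    intro k
    ext w
    constructor
    · intro h; exact h (k + 1) le_rfl
    · rintro hw i hi
      obtain ⟨j, rfl⟩ : ∃ j, i = j + 1 := ⟨i - 1, by omega⟩
      exact hTmono (by omega) hw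
  have hInt0 : {w | ∀ i, 0 ≤ i → w ∈ Λ' i} = J ∩ T 0 := by
    ext w
    constructor
    · intro h; exact ⟨h 0 (by omega), h 1 (by omega)⟩
    · rintro ⟨hJw, hTw⟩ i _
      match i with
      | 0 => exact hJw
      | j + 1 => exact hTmono (Nat.zero_le j) hTw
  -- compute the B-sets
  set B : ℕ → Set ℕ := fun k =>
    if k = 0 then J1 else if k = 1 then {a} else {d (k - 2)} with hBdef
  have hB0 : B 0 = J1 := by simp [hBdef]
  have hB1 : B 1 = {a} := by simp [hBdef]
  have hB2 : ∀ j, B (j + 2) = {d j} := by intro j; simp [hBdef]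
  have hB : ∀ k, towerB Λ' k = B k := by
    intro k
    induction k using Nat.strong_induction_on with
    | _ k ih =>
      rw [towerB_def]
      have hS : {w | ∃ m, ∃ _ : m < k, w ∈ towerB Λ' m} = {w | ∃ m, ∃ _ : m < k, w ∈ B m} := by
        ext w
        constructor
        · rintro ⟨m, hm, hw⟩; exact ⟨m, hm, (ih m hm) ▸ hw⟩
        · rintro ⟨m, hm, hw⟩; exact ⟨m, hm, (ih m hm).symm ▸ hw⟩
      rw [hS]
      clear hS ih
      rcases k with _ | k
      · -- k = 0
        rw [hInt0, hB0]
        ext x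
        simp only [Set.mem_diff, Set.mem_setOf_eq]
        constructor
        · rintro ⟨⟨hxJ, hxT⟩, -⟩
          rcases hxT with h | hx | ⟨n, hn, h⟩
          · exact absurd (h ▸ hxJ) haJ
          · exact hx
          · exact absurd hn (by simp)
        · intro hx
          exact ⟨⟨hJ1subJ hx, Or.inr (Or.inl hx)⟩, by rintro ⟨m, hm, -⟩; omega⟩
      rcases k with _ | k
      · -- k = 1
        rw [hInt, hB1]
        ext x
        simp only [Set.mem_diff, Set.mem_setOf_eq]
        constructor
        · rintro ⟨hxT, hxn⟩
          rcases hxT with h | hx | ⟨n, hn, h⟩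
          · exact h
          · exact absurd ⟨0, by omega, by rw [hB0]; exact hx⟩ hxn
          · exact absurd hn (by simp)
        · intro hx
          have hxa : x = a := hx
          refine ⟨Or.inl hxa, ?_⟩
          rintro ⟨m, hm, hx'⟩
          interval_cases m
          rw [hB0] at hx'
          exact haJ1 (hxa ▸ hx')
      · -- k + 2
        rw [hInt, hB2]
        have hU : {w | ∃ m, ∃ _ : m < k + 2, w ∈ B m} = T k := by
          ext x
          simp only [Set.mem_setOf_eq]
          constructor
          · rintro ⟨m, hm, hx⟩
            rcases m with _ | m
            · rw [hB0] at hx; exact Or.inr (Or.inl hx)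
            rcases m with _ | m
            · rw [hB1] at hx; exact Or.inl hx
            · rw [hB2] at hx
              exact Or.inr (Or.inr ⟨m, Set.mem_Iio.mpr (by omega), (hx : x = d m).symm⟩)
          · rintro (h | hx | ⟨n, hn, hdn⟩)
            · exact ⟨1, by omega, by rw [hB1]; exact h⟩
            · exact ⟨0, by omega, by rw [hB0]; exact hx⟩
            · have hn' : n < k := hn
              exact ⟨n + 2, by omega, by rw [hB2]; exact hdn.symm⟩
        rw [hU]
        ext x
        simp only [Set.mem_diff]
        constructor
        · rintro ⟨hx1, hx2⟩
          rcases hx1 with h | hx | ⟨n, hn, hdn⟩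
          · exact absurd (Or.inl h) hx2
          · exact absurd (Or.inr (Or.inl hx)) hx2
          · have hn' : n < k + 1 := hn
            have hnk : n = k := by
              by_contra hne
              exact hx2 (Or.inr (Or.inr ⟨n, Set.mem_Iio.mpr (by omega), hdn⟩))
            exact Set.mem_singleton_iff.mpr (hnk ▸ hdn.symm)
        · intro hx
          have hxe : x = d k := hx
          rw [hxe]
          exact ⟨hdT' k, hdT k⟩
  refine ⟨Λ', ⟨?_, ?_, ?_, ?_, ?_⟩, hΛ'0⟩
  · -- injectivity
    intro m n h
    rcases m with _ | m
    · rcases n with _ | n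
      · rfl
      · have h' : J = T n := h
        exact absurd (by rw [h']; exact Or.inl rfl : a ∈ J) haJ
    · rcases n with _ | n
      · have h' : T m = J := h
        exact absurd (by rw [← h']; exact Or.inl rfl : a ∈ J) haJ
      · have h' : T m = T n := h
        rcases lt_trichotomy m n with hmn | rfl | hmn
        · exact absurd (by rw [h']; exact hTmono (by omega) (hdT' m) : d m ∈ T m) (hdT m)
        · rfl
        · exact absurd (by rw [← h']; exact hTmono (by omega) (hdT' n) : d n ∈ T n) (hdT n)
  · -- infinite
    intro j
    rcases j with _ | k
    · exact hJinf
    · exact hJ1inf.mono (fun x hx => Or.inr (Or.inl hx))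
  · -- proper
    intro j
    rcases j with _ | k
    · exact hJK
    · exact ⟨hTsubK k, fun hsub => hdT k (hsub (hd_mem k).1)⟩
  · -- nonempty
    intro j
    rw [hB]
    rcases j with _ | j
    · rw [hB0]; exact hJ1inf.nonempty
    rcases j with _ | j
    · rw [hB1]; exact ⟨a, rfl⟩
    · rw [hB2]; exact ⟨d j, rfl⟩
  · -- complete
    ext x
    simp only [Set.mem_iUnion]
    constructor
    · rintro ⟨j, hj⟩
      rw [hB] at hj
      rcases j with _ | j
      · rw [hB0] at hj; exact hJK.1 (hJ1subJ hj)
      rcases j with _ | j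
      · rw [hB1] at hj; exact (Set.mem_singleton_iff.mp hj) ▸ haK
      · rw [hB2] at hj; exact (Set.mem_singleton_iff.mp hj) ▸ (hd_mem j).1
    · intro hxK
      by_cases hxa : x = a
      · exact ⟨1, by rw [hB, hB1]; exact hxa⟩
      by_cases hxJ1 : x ∈ J1
      · exact ⟨0, by rw [hB, hB0]; exact hxJ1⟩
      · obtain ⟨n, hdn⟩ := hd_surj x ⟨hxK, by rintro (h | h) <;> [exact hxa h; exact hxJ1 h]⟩
        exact ⟨n + 2, by rw [hB, hB2]; exact hdn.symm⟩
end

section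
/- Let X be a countable collection of languages with topology T and Cantor–Bendixson derivatives X^(i). If a language L belongs to X^(i) \ X^(i+1) for some i ≥ 0, then there is no infinite perfect tower with terminal language L all of whose languages belong to X^(i). -/
/-- The topology on a collection `𝒳` of languages, generated by the basic open
sets `U_{M,F} = {A ∈ 𝒳 : F ⊆ A ⊆ M}` for `M ∈ 𝒳` and `F ⊆ ℕ` finite. -/
def XTop (𝒳 : Set (Set ℕ)) : TopologicalSpace ↥𝒳 :=
  TopologicalSpace.generateFrom
    {U : Set ↥𝒳 | ∃ M ∈ 𝒳, ∃ F : Finset ℕ,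
      U = {A : ↥𝒳 | ↑F ⊆ (A : Set ℕ) ∧ (A : Set ℕ) ⊆ M}}

/-- The derived set of `Y ⊆ 𝒳`: the set of limit points of `Y` in `(𝒳, T)`,
i.e. points every open neighborhood of which contains a member of `Y` different
from the point itself (accumulation points of `Y`). -/
def derivSet (𝒳 : Set (Set ℕ)) (Y : Set ↥𝒳) : Set ↥𝒳 :=
  {x | @AccPt _ (XTop 𝒳) x (Filter.principal Y)}

/-- The Cantor–Bendixson derivatives `𝒳^(i)` of the collection `𝒳`:
`𝒳^(0) = 𝒳` and `𝒳^(i+1) = d(𝒳^(i))`. -/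
def cbDeriv (𝒳 : Set (Set ℕ)) : ℕ → Set ↥𝒳
  | 0 => Set.univ
  | i + 1 => derivSet 𝒳 (cbDeriv 𝒳 i)

lemma towerB_subset (Λ : ℕ → Set ℕ) (k : ℕ) :
    towerB Λ k ⊆ {w | ∀ i, k ≤ i → w ∈ Λ i} := by
  rw [towerB]; exact Set.diff_subset

/-- If a language `A` of the collection lies in `𝒳^(i) \ 𝒳^(i+1)`, then there is no
infinite perfect tower with terminal language `A` all of whose languages belong to
`𝒳^(i)`. -/
theorem stmt15 (L : ℕ → Set ℕ) (hinf : ∀ i, (L i).Infinite)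
    (i : ℕ) (A : Set ℕ) (hA : A ∈ Set.range L)
    (hmem : (⟨A, hA⟩ : ↥(Set.range L)) ∈ cbDeriv (Set.range L) i)
    (hnot : (⟨A, hA⟩ : ↥(Set.range L)) ∉ cbDeriv (Set.range L) (i + 1)) :
    ¬ ∃ Λ : ℕ → Set ℕ,
        (∀ j, ∃ h : Λ j ∈ Set.range L,
          (⟨Λ j, h⟩ : ↥(Set.range L)) ∈ cbDeriv (Set.range L) i) ∧
        IsPerfectTower Λ A := by
  classical
  rintro ⟨Λ, hΛmem, hT⟩
  set 𝒳 := Set.range L with h𝒳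
  set gens : Set (Set ↥𝒳) :=
    {U : Set ↥𝒳 | ∃ M ∈ 𝒳, ∃ F : Finset ℕ,
      U = {A : ↥𝒳 | ↑F ⊆ (A : Set ℕ) ∧ (A : Set ℕ) ⊆ M}} with hgens
  letI : TopologicalSpace ↥𝒳 := TopologicalSpace.generateFrom gens
  have hnot' : ¬ AccPt (⟨A, hA⟩ : ↥𝒳) (Filter.principal (cbDeriv 𝒳 i)) := hnot
  rw [accPt_iff_nhds] at hnot'
  push_neg at hnot'
  obtain ⟨U, hU, hUsep⟩ := hnot'
  rw [TopologicalSpace.nhds_generateFrom, ← Filter.generate_eq_biInf,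
    Filter.mem_generate_iff] at hU
  obtain ⟨t, htsub, htfin, htU⟩ := hU
  -- For each element of A, eventually in Λ n
  have key : ∀ w ∈ A, ∃ k, ∀ n, k ≤ n → w ∈ Λ n := by
    intro w hw
    rw [← hT.complete] at hw
    obtain ⟨_, ⟨j, rfl⟩, hw⟩ := hw
    exact ⟨j, fun n hn => towerB_subset Λ j hw n hn⟩
  have keyF : ∀ F : Finset ℕ, ↑F ⊆ A → ∃ k, ∀ n, k ≤ n → (↑F : Set ℕ) ⊆ Λ n := by
    intro F
    induction F using Finset.induction_on with
    | empty => exact fun _ => ⟨0, fun n _ => by simp⟩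
    | @insert a s hne ih =>
      intro hsub
      have hsub' : (↑s : Set ℕ) ⊆ A := by
        intro w hw; exact hsub (by simp [hw])
      obtain ⟨k₁, hk₁⟩ := ih hsub'
      obtain ⟨k₂, hk₂⟩ := key a (hsub (by simp))
      refine ⟨max k₁ k₂, fun n hn => ?_⟩
      intro w hw
      rcases Finset.mem_insert.mp (by exact_mod_cast hw) with rfl | hw
      · exact hk₂ n (le_trans (le_max_right _ _) hn)
      · exact hk₁ n (le_trans (le_max_left _ _) hn) hw
  -- the sequence in the subtype
  set x : ℕ → ↥𝒳 := fun n => ⟨Λ n, (hΛmem n).choose⟩ with hx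
  have hev : ∀ s ∈ t, ∀ᶠ n in Filter.atTop, x n ∈ s := by
    intro s hs
    obtain ⟨hsA, hsg⟩ := htsub hs
    obtain ⟨M, hM, F, rfl⟩ := hsg
    obtain ⟨k, hk⟩ := keyF F hsA.1
    refine Filter.eventually_atTop.2 ⟨k, fun n hn => ?_⟩
    exact ⟨hk n hn, (hT.proper n).subset.trans hsA.2⟩
  obtain ⟨n, hn⟩ := ((Filter.eventually_all_finite htfin).2 hev).exists
  have hxU : x n ∈ U := htU (Set.mem_sInter.2 hn)
  have hxY : x n ∈ cbDeriv 𝒳 i := (hΛmem n).choose_spec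
  have hxA : x n = (⟨A, hA⟩ : ↥𝒳) := hUsep (x n) ⟨hxU, hxY⟩
  exact (hT.proper n).ne (congrArg Subtype.val hxA)
end

section
/- Let (J_1, J_2, …) be a feasible sequence of languages with respect to a language K, and let K' be any finite subset of K. Then the family of languages {J_t : t ≥ 1 and K' ⊆ J_t} contains infinitely many distinct languages, and the union of all languages in this family equals K. -/
/-!
Along the enumeration `w` of `K`, every word `w s` lies in `J t` for all `t ≥ s`, so every finite
`K' ⊆ K` is contained in all but finitely many `J t`; this gives the union. No single language
can occur infinitely often in the sequence: it would then contain every `w s`, i.e. all of `K`,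
while each `J t` is a proper subset of `K`. Hence the infinitely many indices `t` with `K' ⊆ J t`
carry infinitely many distinct languages.
-/

/-- The sequence of languages `(J 0, J 1, …)` (possibly with repetitions) is
feasible with respect to `K`: each `J t` is a proper subset of `K`, and there is an
enumeration `w_0, w_1, …` of `K` such that `{w_0, …, w_t} ⊆ J t` for every `t`. -/
def Feasible (J : ℕ → Set ℕ) (K : Set ℕ) : Prop :=
  (∀ t, J t ⊂ K) ∧
  ∃ E : ℕ → ℕ, Function.Injective E ∧ Set.range E = K ∧ ∀ t, ∀ s ≤ t, E s ∈ J t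

open Filter

namespace Feasible

variable {J : ℕ → Set ℕ} {K : Set ℕ}

theorem subset (h : Feasible J K) (t : ℕ) : J t ⊆ K :=
  (h.1 t).subset

theorem eventually_mem (h : Feasible J K) {x : ℕ} (hx : x ∈ K) : ∀ᶠ t in atTop, x ∈ J t := by
  obtain ⟨-, E, -, hrange, hmem⟩ := h
  obtain ⟨s, rfl⟩ : x ∈ Set.range E := hrange ▸ hx
  exact eventually_atTop.2 ⟨s, fun t hst => hmem t s hst⟩

theorem eventually_subset (h : Feasible J K) {K' : Set ℕ} (hK'fin : K'.Finite)
    (hK'sub : K' ⊆ K) : ∀ᶠ t in atTop, K' ⊆ J t :=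
  (eventually_all_finite hK'fin).2 fun _ hx => h.eventually_mem (hK'sub hx)

theorem finite_preimage_singleton (h : Feasible J K) (t₀ : ℕ) : (J ⁻¹' {J t₀}).Finite := by
  by_contra hinf
  have hfreq : ∃ᶠ t in atTop, J t = J t₀ := Nat.frequently_atTop_iff_infinite.2 hinf
  have hKsub : K ⊆ J t₀ := fun x hx =>
    let ⟨_, hxt, heq⟩ := ((h.eventually_mem hx).and_frequently hfreq).exists
    heq ▸ hxt
  exact (h.1 t₀).2 hKsub

end Feasible

theorem stmt19_general (J : ℕ → Set ℕ)
    (K : Set ℕ) (hfeas : Feasible J K)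
    (K' : Set ℕ) (hK'fin : K'.Finite) (hK'sub : K' ⊆ K) :
    (J '' {t : ℕ | K' ⊆ J t}).Infinite ∧ (⋃ t ∈ {t : ℕ | K' ⊆ J t}, J t) = K := by
  have hev := hfeas.eventually_subset hK'fin hK'sub
  refine ⟨fun himage => ?_, ?_⟩
  · have hfibers : ∀ A ∈ J '' {t | K' ⊆ J t}, (J ⁻¹' {A}).Finite := by
      rintro _ ⟨t₀, -, rfl⟩
      exact hfeas.finite_preimage_singleton t₀
    exact Nat.frequently_atTop_iff_infinite.1 hev.frequently
      ((himage.preimage' hfibers).subset (Set.subset_preimage_image J _))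
  · refine subset_antisymm (Set.iUnion₂_subset fun t _ => hfeas.subset t) fun x hx => ?_
    obtain ⟨t, hK't, hxt⟩ := (hev.and (hfeas.eventually_mem hx)).exists
    exact Set.mem_biUnion hK't hxt

/-- For a feasible sequence with respect to `K` and any finite `K' ⊆ K`, the family
of languages in the sequence that contain `K'` contains infinitely many distinct
languages, and its union equals `K`. -/
theorem stmt19 (J : ℕ → Set ℕ) (hJinf : ∀ t, (J t).Infinite)
    (K : Set ℕ) (hK : K.Infinite) (hfeas : Feasible J K)
    (K' : Set ℕ) (hK'fin : K'.Finite) (hK'sub : K' ⊆ K) :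
    (J '' {t : ℕ | K' ⊆ J t}).Infinite ∧ (⋃ t ∈ {t : ℕ | K' ⊆ J t}, J t) = K :=
  stmt19_general J K hfeas K' hK'fin hK'sub
end
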